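/- Let q : ℕ → (0,1] be a sequence whose range is dense in [0,1], and let b₀ ∈ C([0,1], ℂ). For (n,m) ∈ ℕ×ℕ (with m ≥ 1) set b_{(n,m)} := 2^{-n}·ψ_{q_n,m}·b₀ ∈ C([0,1], ℂ). If the family (|b_{(n,m)}|²)_{(n,m)∈ℕ×ℕ} is summable in the Banach space C([0,1], ℝ) with the supremum norm, then b₀ = 0 (and hence every b_{(n,m)} = 0). -/

import Mathlib

/-- `f q m t = max 0 (min 1 (m * (q - t)))`. -/
noncomputable def f (q : ℝ) (m : ℕ) (t : ℝ) : ℝ := max 0 (min 1 (m * (q - t)))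

/-- `ψ q m t = sqrt (f q m t - f q (m-1) t)` (for `m ≥ 1`). -/
noncomputable def ψ (q : ℝ) (m : ℕ) (t : ℝ) : ℝ := Real.sqrt (f q m t - f q (m - 1) t)

lemma continuous_ψ (q : ℝ) (m : ℕ) : Continuous (ψ q m) := by
  unfold ψ f; fun_prop

/-- `ψ q m` as a continuous complex-valued function on `[0,1]`. -/
noncomputable def ψCc (q : ℝ) (m : ℕ) : C(Set.Icc (0 : ℝ) 1, ℂ) :=
  ⟨fun t => (ψ q m t.val : ℂ),
    Complex.continuous_ofReal.comp ((continuous_ψ q m).comp continuous_subtype_val)⟩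

/-- For `g : C([0,1], ℂ)`, the continuous real function `t ↦ |g t|²`. -/
noncomputable def absSq (g : C(Set.Icc (0 : ℝ) 1, ℂ)) : C(Set.Icc (0 : ℝ) 1, ℝ) :=
  ⟨fun t => ‖g t‖ ^ 2, by fun_prop⟩

open scoped Topology

lemma f_zero (q t : ℝ) : f q 0 t = 0 := by simp [f]

lemma f_eq_zero (q t : ℝ) (h : q ≤ t) (k : ℕ) : f q k t = 0 := by
  unfold f
  have : (k:ℝ) * (q - t) ≤ 0 :=
    mul_nonpos_of_nonneg_of_nonpos (by positivity) (by linarith)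
  rw [max_eq_left (le_trans (min_le_right _ _) this)]

lemma f_eq_one (q t : ℝ) (k : ℕ) (h : 1 ≤ (k:ℝ) * (q - t)) : f q k t = 1 := by
  unfold f
  rw [min_eq_left h, max_eq_right zero_le_one]

lemma f_mono (q t : ℝ) (m : ℕ) : f q m t ≤ f q (m+1) t := by
  rcases le_or_gt t q with h | h
  · unfold f
    refine max_le_max le_rfl (min_le_min le_rfl ?_)
    push_cast
    nlinarith [sub_nonneg.mpr h]
  · rw [f_eq_zero q t h.le, f_eq_zero q t h.le]

lemma psi_sq (q t : ℝ) (m : ℕ) : ψ q (m+1) t ^ 2 = f q (m+1) t - f q m t := by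
  unfold ψ
  rw [Nat.add_sub_cancel]
  exact Real.sq_sqrt (sub_nonneg.mpr (f_mono q t m))

lemma hasSum_psi (q t : ℝ) :
    HasSum (fun m : ℕ => ψ q (m+1) t ^ 2) (if t < q then 1 else 0) := by
  rw [hasSum_iff_tendsto_nat_of_nonneg (fun m => sq_nonneg _)]
  have hsum : ∀ M : ℕ, ∑ m ∈ Finset.range M, ψ q (m+1) t ^ 2 = f q M t := by
    intro M
    simp only [psi_sq]
    rw [Finset.sum_range_sub (fun m => f q m t), f_zero, sub_zero]
  simp only [hsum]
  rcases lt_or_ge t q with h | h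
  · rw [if_pos h]
    have hqt : 0 < q - t := sub_pos.mpr h
    obtain ⟨N, hN⟩ := exists_nat_ge (1/(q-t))
    have hev : ∀ᶠ M in Filter.atTop, f q M t = 1 := by
      filter_upwards [Filter.eventually_ge_atTop N] with M hM
      apply f_eq_one
      rw [div_le_iff₀ hqt] at hN
      calc (1:ℝ) ≤ N * (q - t) := hN
        _ ≤ M * (q - t) := mul_le_mul_of_nonneg_right (Nat.cast_le.mpr hM) hqt.le
    exact Filter.Tendsto.congr' (hev.mono fun M hM => hM.symm) tendsto_const_nhds
  · rw [if_neg (not_lt.mpr h)]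
    have : ∀ M : ℕ, f q M t = 0 := f_eq_zero q t h
    simp only [this]
    exact tendsto_const_nhds

set_option maxHeartbeats 1000000 in
set_option synthInstance.maxHeartbeats 400000 in
/-- Let `q : ℕ → (0,1]` have dense range in `[0,1]` and let `b₀ ∈ C([0,1], ℂ)`. Set
`b (n,m) := 2^{-n} · ψ_{q n, m+1} · b₀` (so the second index runs over `m ≥ 1`). If the
family `(|b (n,m)|²)_{(n,m)}` is summable in `C([0,1], ℝ)` with the supremum norm, then
`b₀ = 0` and hence every `b (n,m) = 0`. -/
theorem stmt10 (q : ℕ → ℝ) (hq : ∀ n, q n ∈ Set.Ioc (0 : ℝ) 1)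
    (hdense : Set.Icc (0 : ℝ) 1 ⊆ closure (Set.range q))
    (b₀ : C(Set.Icc (0 : ℝ) 1, ℂ))
    (b : ℕ × ℕ → C(Set.Icc (0 : ℝ) 1, ℂ))
    (hb : ∀ p : ℕ × ℕ, b p = ((2 : ℂ) ^ p.1)⁻¹ • (ψCc (q p.1) (p.2 + 1) * b₀))
    (hsum : Summable (fun p : ℕ × ℕ => absSq (b p))) :
    b₀ = 0 ∧ ∀ p : ℕ × ℕ, b p = 0 := by
  set w : ℕ → ℝ := fun n => (4:ℝ)⁻¹ ^ n with hw
  have hwpos : ∀ n, 0 < w n := fun n => by positivity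
  have hwsum : Summable w := summable_geometric_of_lt_one (by norm_num) (by norm_num)
  -- value of absSq (b (n,m)) at a point
  have habs : ∀ (n m : ℕ) (x : Set.Icc (0:ℝ) 1),
      absSq (b (n, m)) x = w n * (ψ (q n) (m+1) x.val ^ 2) * ‖b₀ x‖ ^ 2 := by
    intro n m x
    rw [hb]
    simp only [absSq, ContinuousMap.coe_mk, ContinuousMap.smul_apply,
      ContinuousMap.mul_apply, norm_smul, norm_mul, norm_inv, norm_pow, ψCc,
      Complex.norm_real, Complex.norm_ofNat, Real.norm_eq_abs]
    rw [hw]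
    rw [show ((4:ℝ))⁻¹ = ((2:ℝ)⁻¹)^2 by norm_num]
    rw [← sq_abs (ψ (q n) (m+1) x.val)]
    ring_nf
    rw [pow_mul']
    norm_num
    ring
  -- indicator
  set I : ℕ → Set.Icc (0:ℝ) 1 → ℝ :=
    fun n x => if (x:ℝ) < q n then 1 else 0 with hI
  have hI01 : ∀ n x, 0 ≤ I n x ∧ I n x ≤ 1 := by
    intro n x; simp only [hI]; split <;> norm_num
  have hSsum : ∀ x, Summable (fun n => w n * I n x) := by
    intro x
    refine Summable.of_nonneg_of_le (fun n => mul_nonneg (hwpos n).le (hI01 n x).1)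
      (fun n => ?_) hwsum
    calc w n * I n x ≤ w n * 1 := by
          exact mul_le_mul_of_nonneg_left (hI01 n x).2 (hwpos n).le
      _ = w n := mul_one _
  set S : Set.Icc (0:ℝ) 1 → ℝ := fun x => ∑' n, w n * I n x with hS
  set G : C(Set.Icc (0:ℝ) 1, ℝ) := ∑' p, absSq (b p) with hG
  have hGsum : HasSum (fun p => absSq (b p)) G := hsum.hasSum
  have hGx : ∀ x, HasSum (fun p : ℕ × ℕ => absSq (b p) x) (G x) := by
    intro x
    let ev : C(Set.Icc (0:ℝ) 1, ℝ) →+ ℝ :=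
      { toFun := fun g => g x, map_zero' := rfl, map_add' := fun g h => rfl }
    exact hGsum.map ev (continuous_eval_const x)
  have hfib : ∀ (x) (n : ℕ),
      HasSum (fun m : ℕ => absSq (b (n, m)) x) (‖b₀ x‖^2 * (w n * I n x)) := by
    intro x n
    have h1 := ((hasSum_psi (q n) x.val).mul_left (w n * ‖b₀ x‖^2))
    have h2 : (fun m : ℕ => w n * ‖b₀ x‖^2 * ψ (q n) (m+1) x.val ^ 2)
        = fun m => absSq (b (n, m)) x := by
      funext m; rw [habs]; ring
    rw [h2] at h1
    convert h1 using 1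
    · rfl
    simp only [hI]; ring
  have hGS : ∀ x, G x = ‖b₀ x‖^2 * S x := by
    intro x
    have h1 : HasSum (fun n => ‖b₀ x‖^2 * (w n * I n x)) (G x) :=
      (hGx x).prod_fiberwise (hfib x)
    have h2 : HasSum (fun n => ‖b₀ x‖^2 * (w n * I n x)) (‖b₀ x‖^2 * S x) :=
      (hSsum x).hasSum.mul_left _
    exact h1.unique h2
  -- main argument
  have hb₀ : b₀ = 0 := by
    by_contra hbne
    have : ∃ x, b₀ x ≠ 0 := by
      by_contra h'
      push_neg at h'
      exact hbne (ContinuousMap.ext fun x => h' x)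
    obtain ⟨x₀, hx₀⟩ := this
    set c : ℝ := ‖b₀ x₀‖^2 with hc
    have hcpos : 0 < c := pow_pos (norm_pos_iff.mpr hx₀) 2
    set φ : Set.Icc (0:ℝ) 1 → ℝ := fun y => ‖b₀ y‖^2 with hφ
    have hφcont : Continuous φ := (absSq b₀).continuous
    -- neighborhood where φ > c/2
    have hca : ContinuousAt φ x₀ := hφcont.continuousAt
    rw [Metric.continuousAt_iff] at hca
    obtain ⟨δ, hδpos, hδ⟩ := hca (c/2) (by linarith)
    have hφbig : ∀ y : Set.Icc (0:ℝ) 1, dist y x₀ < δ → c/2 < φ y := by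
      intro y hy
      have := hδ hy
      rw [Real.dist_eq] at this
      have : |φ y - φ x₀| < c/2 := this
      have hle : φ x₀ - φ y ≤ |φ y - φ x₀| := by
        rw [abs_sub_comm]; exact le_abs_self _
      have : φ x₀ = c := rfl
      linarith [hle, abs_lt.mp ‹|φ y - φ x₀| < c/2›]
    -- pick n with q n close to x₀
    have hx₀cl : (x₀ : ℝ) ∈ closure (Set.range q) := hdense x₀.2
    obtain ⟨z, ⟨n, rfl⟩, hz⟩ := Metric.mem_closure_iff.mp hx₀cl (δ/2) (by linarith)
    set xn : Set.Icc (0:ℝ) 1 := ⟨q n, ⟨(hq n).1.le, (hq n).2⟩⟩ with hxn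
    have hdxn : dist xn x₀ < δ/2 := by
      rw [Subtype.dist_eq, dist_comm]; exact hz
    -- approximating sequence from the left
    set η : ℝ := min (q n / 2) (δ/2) with hη
    have hηpos : 0 < η := lt_min (by linarith [(hq n).1]) (by linarith)
    have hηq : η ≤ q n / 2 := min_le_left _ _
    have hηδ : η ≤ δ/2 := min_le_right _ _
    have hmem : ∀ j : ℕ, q n - η / (j+1) ∈ Set.Icc (0:ℝ) 1 := by
      intro j
      constructor
      · have h1 : η / (j+1) ≤ η := by
          apply div_le_self hηpos.le; push_cast; linarith
        linarith [(hq n).1]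
      · have : 0 < η / (j+1) := by positivity
        linarith [(hq n).2]
    set tseq : ℕ → Set.Icc (0:ℝ) 1 := fun j => ⟨q n - η / (j+1), hmem j⟩ with htseq
    have htlt : ∀ j, (tseq j : ℝ) < q n := by
      intro j
      have : 0 < η / (j+1) := by positivity
      simp only [htseq]; linarith
    have hdt : ∀ j, dist (tseq j) xn ≤ η := by
      intro j
      rw [Subtype.dist_eq, Real.dist_eq]
      simp only [htseq, hxn]
      have h1 : η / (j+1) ≤ η := by
        apply div_le_self hηpos.le; push_cast; linarith
      have h2 : 0 < η / (j+1) := by positivity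
      rw [abs_le]; constructor <;> linarith
    have htend : Filter.Tendsto tseq Filter.atTop (𝓝 xn) := by
      rw [tendsto_subtype_rng]
      simp only [htseq]
      have h0 : Filter.Tendsto (fun j : ℕ => η / (j+1)) Filter.atTop (𝓝 0) := by
        have := tendsto_one_div_add_atTop_nhds_zero_nat (𝕜 := ℝ)
        have h2 := this.const_mul η
        simp only [mul_one_div] at h2
        simpa using h2
      have := (tendsto_const_nhds (x := q n) (f := Filter.atTop (α := ℕ))).sub h0
      simpa using this
    -- key inequality : S xn + w n ≤ S (tseq j)
    have hkey : ∀ j, S xn + w n ≤ S (tseq j) := by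
      intro j
      have hBsum : Summable (fun k => w k * I k xn + if k = n then w n else 0) :=
        (hSsum xn).add (hasSum_ite_eq n (w n)).summable
      have hle : ∀ k, w k * I k xn + (if k = n then w n else 0) ≤ w k * I k (tseq j) := by
        intro k
        by_cases hk : k = n
        · subst hk
          have h1 : I k xn = 0 := by simp [hI, hxn]
          have h2 : I k (tseq j) = 1 := by simp [hI, htlt j]
          rw [h1, h2]; simp
        · rw [if_neg hk]
          have : I k xn ≤ I k (tseq j) := by
            simp only [hI]
            by_cases h : (xn:ℝ) < q k
            · rw [if_pos h, if_pos (lt_trans (htlt j) h)]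
            · rw [if_neg h]; exact (hI01 k (tseq j)).1
          simpa using mul_le_mul_of_nonneg_left this (hwpos k).le
      have := Summable.tsum_le_tsum hle hBsum (hSsum (tseq j))
      calc S xn + w n
          = ∑' k, (w k * I k xn + if k = n then w n else 0) := by
            rw [Summable.tsum_add (hSsum xn) (hasSum_ite_eq n (w n)).summable,
              (hasSum_ite_eq n (w n)).tsum_eq]
        _ ≤ S (tseq j) := this
    -- continuity contradiction
    have hφxn : c/2 < φ xn := hφbig xn (by linarith [hdxn])
    have hφt : ∀ j, c/2 < φ (tseq j) := by
      intro j
      apply hφbig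
      calc dist (tseq j) x₀ ≤ dist (tseq j) xn + dist xn x₀ := dist_triangle _ _ _
        _ < η + δ/2 := by linarith [hdt j, hdxn]
        _ ≤ δ := by linarith
    set T : Set.Icc (0:ℝ) 1 → ℝ := fun y => G y / φ y with hT
    have hTeq : ∀ y : Set.Icc (0:ℝ) 1, φ y ≠ 0 → T y = S y := by
      intro y hy
      simp only [hT]
      rw [hGS y]
      show φ y * S y / φ y = S y
      field_simp
    have hTcont : ContinuousAt T xn := by
      apply ContinuousAt.div
      · exact G.continuous.continuousAt
      · exact hφcont.continuousAt
      · linarith [hφxn]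
    have htendT : Filter.Tendsto (fun j => T (tseq j)) Filter.atTop (𝓝 (T xn)) :=
      hTcont.tendsto.comp htend
    have htendS : Filter.Tendsto (fun j => S (tseq j)) Filter.atTop (𝓝 (S xn)) := by
      rw [show S xn = T xn from (hTeq xn (by linarith [hφxn])).symm]
      apply htendT.congr
      intro j
      exact hTeq (tseq j) (by linarith [hφt j])
    have : S xn + w n ≤ S xn := ge_of_tendsto' htendS hkey
    linarith [hwpos n]
  refine ⟨hb₀, fun p => ?_⟩
  ext x
  rw [hb]
  simp [hb₀]
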